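/- arXiv:math/0511642 — 2 statements merged into one kernel-verified Lean document; each statement's English description precedes it below -/
import Mathlib

section
/- For every short exact sequence 0 → M → N → P → 0 of finite-dimensional A-modules, the induced sequence 0 → F_1(M) → F_1(N) → F_1(P) → 0 of graded R-modules is exact; that is, the functor F_1 is exact on finite-dimensional A-modules. -/
/-!
`F_1(M)` is the cokernel of the generic element `Id` acting on `M̃ = R ⊗[k] M`. Base change along
`k → R` is exact, and `Id` is injective on every `M̃`: its determinant is a nonzero polynomial,
since evaluating at the coordinates of `1 ∈ A` turns `Id` into the identity of `M`. The snake
lemma for `Id` acting on `0 → M̃ → Ñ → P̃ → 0` then yields the exact sequence of cokernels, the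
connecting map vanishing because `Id` is injective on `P̃`.
-/

open TensorProduct

noncomputable section FlCore

variable (k : Type) [Field k] {A : Type} [Ring A] [Algebra k A]

/-- The ring of polynomial functions on `A^l`, w.r.t. a basis of `A` indexed by `Fin d`. -/
abbrev polyR (k : Type) [Field k] (d l : ℕ) : Type := MvPolynomial (Fin d × Fin l) k

variable {M N : Type}
  [AddCommGroup M] [Module k M] [Module A M] [IsScalarTower k A M]
  [AddCommGroup N] [Module k N] [Module A N] [IsScalarTower k A N]

/-- The `k`-linear action of `a : A` on an `A`-module. -/
def actL (a : A) : M →ₗ[k] M := Algebra.lsmul k k M a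

variable {d l : ℕ} (b : Module.Basis (Fin d) k A)

/-- The generic element `Id_j = ∑ i, x_{ij} ⊗ f_i` acting `R`-linearly on `R ⊗[k] M`. -/
def genId (j : Fin l) :
    polyR k d l ⊗[k] M →ₗ[polyR k d l] polyR k d l ⊗[k] M :=
  ∑ i : Fin d, (MvPolynomial.X (i, j) : polyR k d l) •
    LinearMap.baseChange (polyR k d l) (actL k (b i) : M →ₗ[k] M)

/-- The submodule `Id_1·M̃ + ⋯ + Id_l·M̃` of `M̃ = R ⊗[k] M`. -/
def genSub : Submodule (polyR k d l) (polyR k d l ⊗[k] M) :=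
  ⨆ j : Fin l, LinearMap.range (genId k b (M := M) j)

/-- Restriction of scalars of an `A`-linear map to a `k`-linear map. -/
def restrictK (f : M →ₗ[A] N) : M →ₗ[k] N where
  toFun := f
  map_add' := map_add f
  map_smul' c m := by
    show f (c • m) = c • f m
    rw [← algebraMap_smul A c m, map_smul, algebraMap_smul]

/-- The induced degree-0 graded homomorphism `F_l(M) → F_l(N)`. -/
def Fmap (f : M →ₗ[A] N) :
    (polyR k d l ⊗[k] M ⧸ genSub k (l := l) b (M := M)) →ₗ[polyR k d l]
      (polyR k d l ⊗[k] N ⧸ genSub k (l := l) b (M := N)) :=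
  Submodule.mapQ _ _ (LinearMap.baseChange (polyR k d l) (restrictK k f)) (by
    refine iSup_le fun j => ?_
    rintro x ⟨y, rfl⟩
    refine Submodule.mem_iSup_of_mem j ⟨LinearMap.baseChange (polyR k d l) (restrictK k f) y, ?_⟩
    have hc : ∀ i : Fin d,
        (LinearMap.baseChange (polyR k d l) (actL k (b i) : N →ₗ[k] N)).comp
          (LinearMap.baseChange (polyR k d l) (restrictK k f))
        = (LinearMap.baseChange (polyR k d l) (restrictK k f)).comp
          (LinearMap.baseChange (polyR k d l) (actL k (b i) : M →ₗ[k] M)) := by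
      intro i
      rw [← LinearMap.baseChange_comp, ← LinearMap.baseChange_comp]
      congr 1
      ext m
      show (b i) • (f m) = f ((b i) • m)
      rw [map_smul]
    have : ∀ z, (genId k b (M := N) j) (LinearMap.baseChange (polyR k d l) (restrictK k f) z)
        = LinearMap.baseChange (polyR k d l) (restrictK k f) ((genId k b (M := M) j) z) := by
      intro z
      simp only [genId, LinearMap.sum_apply, LinearMap.smul_apply, map_sum, map_smul]
      refine Finset.sum_congr rfl fun i _ => ?_
      congr 1
      have := DFunLike.congr_fun (hc i) z
      simpa using this
    exact this y)

end FlCore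

open TensorProduct LinearMap Function

namespace Submodule

variable {R M N : Type*} [Ring R] [AddCommGroup M] [Module R M] [AddCommGroup N] [Module R N]
  {p : Submodule R M} {q : Submodule R N} {f : M →ₗ[R] N}

lemma mapQ_injective_of_comap_le (h : p ≤ q.comap f) (h' : q.comap f ≤ p) :
    Injective (p.mapQ q f h) := by
  rw [← ker_eq_bot]
  refine ker_liftQ_eq_bot _ _ _ ?_
  rwa [ker_comp, ker_mkQ]

lemma mapQ_surjective_of_surjective (h : p ≤ q.comap f) (hf : Surjective f) :
    Surjective (p.mapQ q f h) := by
  rw [← range_eq_top, range_mapQ, range_eq_top.mpr hf, map_top, range_mkQ]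

end Submodule

section CokernelSequence

variable {R : Type*} [Ring R] {M₀ N₀ P₀ M N P : Type*}
  [AddCommGroup M₀] [Module R M₀] [AddCommGroup N₀] [Module R N₀] [AddCommGroup P₀] [Module R P₀]
  [AddCommGroup M] [Module R M] [AddCommGroup N] [Module R N] [AddCommGroup P] [Module R P]
  {f₀ : M₀ →ₗ[R] N₀} {g₀ : N₀ →ₗ[R] P₀} {f : M →ₗ[R] N} {g : N →ₗ[R] P}
  {α : M₀ →ₗ[R] M} {β : N₀ →ₗ[R] N} {γ : P₀ →ₗ[R] P}

lemma comap_range_le_range_of_exact (hαβ : f ∘ₗ α = β ∘ₗ f₀) (hβγ : g ∘ₗ β = γ ∘ₗ g₀)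
    (hf₀g₀ : Exact f₀ g₀) (hf : Injective f) (hfg : Exact f g) (hγ : Injective γ) :
    (range β).comap f ≤ range α := by
  rintro m ⟨y, hy⟩
  have hg₀y : g₀ y = 0 := hγ <| by
    rw [map_zero, ← LinearMap.comp_apply, ← hβγ, LinearMap.comp_apply, hy,
      hfg.apply_apply_eq_zero]
  obtain ⟨z, rfl⟩ := (hf₀g₀ y).mp hg₀y
  exact ⟨z, hf <| by rw [← LinearMap.comp_apply, hαβ, LinearMap.comp_apply, hy]⟩

lemma map_range_eq_range_of_surjective (hβγ : g ∘ₗ β = γ ∘ₗ g₀) (hg₀ : Surjective g₀) :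
    (range β).map g = range γ := by
  rw [← range_comp, hβγ, range_comp, range_eq_top.mpr hg₀, Submodule.map_top]

end CokernelSequence

lemma LinearMap.injective_of_det_ne_zero {R M : Type*} [CommRing R] [IsDomain R]
    [AddCommGroup M] [Module R M] [Module.Free R M] [Module.Finite R M] {φ : M →ₗ[R] M}
    (h : LinearMap.det φ ≠ 0) : Injective φ := by
  classical
  let bM := Module.Free.chooseBasis R M
  rw [← LinearMap.det_toMatrix bM] at h
  intro x y hxy
  refine bM.equivFun.injective (Matrix.mulVec_injective_of_det_ne_zero h ?_)
  simp only [Module.Basis.equivFun_apply, LinearMap.toMatrix_mulVec_repr, hxy]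

section GenericElement

variable (k : Type) [Field k] {A : Type} [Ring A] [Algebra k A] {M N : Type}
  [AddCommGroup M] [Module k M] [Module A M] [IsScalarTower k A M]
  [AddCommGroup N] [Module k N] [Module A N] [IsScalarTower k A N]
  {d l : ℕ} (b : Module.Basis (Fin d) k A)

lemma baseChange_restrictK_comp_genId (f : M →ₗ[A] N) (j : Fin l) :
    (restrictK k f).baseChange (polyR k d l) ∘ₗ genId k b j
      = genId k b j ∘ₗ (restrictK k f).baseChange (polyR k d l) := by
  ext m
  simp [genId, actL, restrictK]

lemma sum_repr_one_smul_actL :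
    ∑ i, b.repr 1 i • actL k (b i) = (LinearMap.id : M →ₗ[k] M) := by
  simp only [actL, ← map_smul, ← map_sum, b.sum_repr, map_one, Module.End.one_eq_id]

lemma map_eval_toMatrix_genId {ι : Type} [Fintype ι] [DecidableEq ι] (bM : Module.Basis ι k M)
    (j : Fin l) :
    (LinearMap.toMatrix (Algebra.TensorProduct.basis (polyR k d l) bM)
      (Algebra.TensorProduct.basis (polyR k d l) bM) (genId k b j)).map
        (MvPolynomial.eval fun p => b.repr 1 p.1) = 1 := by
  rw [← LinearMap.toMatrix_id bM, ← sum_repr_one_smul_actL k b]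
  ext p q
  simp [genId, LinearMap.toMatrix_baseChange, Matrix.sum_apply]

lemma genId_injective [Module.Finite k M] (j : Fin l) :
    Injective (genId k b (M := M) j) := by
  let bR := Algebra.TensorProduct.basis (polyR k d l) (Module.finBasis k M)
  refine LinearMap.injective_of_det_ne_zero fun h => zero_ne_one (α := k) ?_
  have hev := RingHom.map_det (MvPolynomial.eval fun p => b.repr 1 p.1)
    (LinearMap.toMatrix bR bR (genId k b j))
  rwa [RingHom.mapMatrix_apply, map_eval_toMatrix_genId, Matrix.det_one, LinearMap.det_toMatrix,
    h, map_zero] at hev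

lemma genSub_one_eq_range : genSub k (l := 1) b (M := M) = range (genId k b 0) :=
  iSup_unique _

end GenericElement

theorem statement2_general (k : Type) [Field k] {A : Type} [Ring A] [Algebra k A]
    {d : ℕ} (b : Module.Basis (Fin d) k A)
    (M N P : Type)
    [AddCommGroup M] [Module k M] [Module A M] [IsScalarTower k A M]
    [AddCommGroup N] [Module k N] [Module A N] [IsScalarTower k A N]
    [AddCommGroup P] [Module k P] [Module A P] [IsScalarTower k A P] [Module.Finite k P]
    (f : M →ₗ[A] N) (g : N →ₗ[A] P)
    (hf : Function.Injective f) (hg : Function.Surjective g)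
    (hfg : Function.Exact f g) :
    Function.Injective (Fmap k (l := 1) b f) ∧
    Function.Exact (Fmap k (l := 1) b f) (Fmap k (l := 1) b g) ∧
    Function.Surjective (Fmap k (l := 1) b g) := by
  let R := polyR k d 1
  have hf' : Injective ((restrictK k f).baseChange R) := by
    rw [baseChange_eq_ltensor]
    exact Module.Flat.lTensor_preserves_injective_linearMap _ hf
  have hg' : Surjective ((restrictK k g).baseChange R) := baseChange_surjective R hg
  have hfg' : Exact ((restrictK k f).baseChange R) ((restrictK k g).baseChange R) := by
    rw [baseChange_eq_ltensor, baseChange_eq_ltensor]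
    exact Module.Flat.lTensor_exact R hfg
  have hαβ := baseChange_restrictK_comp_genId k b f (0 : Fin 1)
  have hβγ := baseChange_restrictK_comp_genId k b g (0 : Fin 1)
  refine ⟨Submodule.mapQ_injective_of_comap_le _ ?_, (hfg'.exact_mapQ_iff _ _).mpr ?_,
    Submodule.mapQ_surjective_of_surjective _ hg'⟩
  · simpa only [genSub_one_eq_range] using
      comap_range_le_range_of_exact hαβ hβγ hfg' hf' hfg' (genId_injective k b 0)
  · rw [genSub_one_eq_range, genSub_one_eq_range, map_range_eq_range_of_surjective hβγ hg']
    exact inf_le_right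

/-- The functor `F_1` is exact: every short exact sequence
`0 → M → N → P → 0` of finite-dimensional `A`-modules induces a short exact sequence
`0 → F_1(M) → F_1(N) → F_1(P) → 0` of graded `R`-modules. -/
theorem statement2 (k : Type) [Field k] {A : Type} [Ring A] [Algebra k A]
    {d : ℕ} (b : Module.Basis (Fin d) k A)
    (M N P : Type)
    [AddCommGroup M] [Module k M] [Module A M] [IsScalarTower k A M] [Module.Finite k M]
    [AddCommGroup N] [Module k N] [Module A N] [IsScalarTower k A N] [Module.Finite k N]
    [AddCommGroup P] [Module k P] [Module A P] [IsScalarTower k A P] [Module.Finite k P]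
    (f : M →ₗ[A] N) (g : N →ₗ[A] P)
    (hf : Function.Injective f) (hg : Function.Surjective g)
    (hfg : Function.Exact f g) :
    Function.Injective (Fmap k (l := 1) b f) ∧
    Function.Exact (Fmap k (l := 1) b f) (Fmap k (l := 1) b g) ∧
    Function.Surjective (Fmap k (l := 1) b g) :=
  statement2_general k b M N P f g hf hg hfg
end

section
/- For every nonzero finite-dimensional A-module M, the annihilator of the R-module F_1(M) is a principal ideal of R. -/
open TensorProduct

/-!
In a basis of `M`, `Id` acts on `M̃ ≅ Rⁿ` by a matrix `P` whose determinant specialises, at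
the coordinates of `1 ∈ A`, to `det (id_M) = 1`; so `det P ≠ 0`. Then `r` kills `coker P` iff
`r • 1 = P * X` for some `X`, iff `det P ∣ r * c` for every entry `c` of `adj P`. In the UFD `R`
each of these conditions says `det P / gcd (det P) c ∣ r`, and their conjunction is divisibility
by the lcm of these quotients.
-/

theorem exists_dvd_iff_dvd_mul {α : Type*} [CommMonoidWithZero α] [GCDMonoid α]
    {a : α} (ha : a ≠ 0) (c : α) : ∃ q : α, ∀ r : α, q ∣ r ↔ a ∣ r * c := by
  obtain ⟨q, hq⟩ := gcd_dvd_left a c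
  have hg : gcd a c ≠ 0 := fun h ↦ ha (by rw [hq, h, zero_mul])
  refine ⟨q, fun r ↦ ?_⟩
  rw [mul_comm r, ← dvd_gcd_mul_iff_dvd_mul, ← mul_dvd_mul_iff_left hg, ← hq]

theorem exists_dvd_iff_forall_dvd_mul {α ι : Type*} [CommMonoidWithZero α]
    [NormalizedGCDMonoid α] [Fintype ι] {a : α} (ha : a ≠ 0) (c : ι → α) :
    ∃ q : α, ∀ r : α, q ∣ r ↔ ∀ i, a ∣ r * c i := by
  choose q hq using fun i ↦ exists_dvd_iff_dvd_mul ha (c i)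
  exact ⟨Finset.univ.lcm q, fun r ↦ by simp [Finset.lcm_dvd_iff, hq]⟩

namespace Matrix

variable {R n : Type*} [CommRing R] [Fintype n] [DecidableEq n]

theorem mem_annihilator_cokernel_iff (P : Matrix n n R) (r : R) :
    r ∈ Module.annihilator R ((n → R) ⧸ LinearMap.range P.mulVecLin) ↔
      ∃ X : Matrix n n R, P * X = r • 1 := by
  simp only [Submodule.annihilator_quotient, Submodule.mem_colon, Set.mem_univ, true_implies,
    LinearMap.mem_range, mulVecLin_apply]
  constructor
  · intro h
    choose w hw using fun j ↦ h (Pi.single j 1)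
    refine ⟨(of w)ᵀ, ext fun i j ↦ ?_⟩
    simpa [mul_apply, mulVec, dotProduct, Pi.single_apply, one_apply, eq_comm] using
      congrFun (hw j) i
  · rintro ⟨X, hX⟩ v
    exact ⟨X *ᵥ v, by rw [mulVec_mulVec, hX, smul_mulVec, one_mulVec]⟩

theorem exists_mul_eq_smul_one_iff [IsDomain R] {P : Matrix n n R} (hP : P.det ≠ 0) (r : R) :
    (∃ X : Matrix n n R, P * X = r • 1) ↔ ∀ i j, P.det ∣ r * P.adjugate i j := by
  constructor
  · rintro ⟨X, hX⟩ i j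
    have : P.det • X = r • P.adjugate := by
      rw [← one_mul X, ← smul_mul_assoc, ← adjugate_mul, mul_assoc, hX, mul_smul_comm, mul_one]
    exact ⟨X i j, by simpa using (congrFun (congrFun this i) j).symm⟩
  · intro h
    choose X hX using h
    have hadj : r • P.adjugate = P.det • of X := ext fun i j ↦ by simpa using hX i j
    have hdet : P.det • (P * of X) = P.det • (r • 1) := by
      rw [← mul_smul_comm, ← hadj, mul_smul_comm, mul_adjugate, smul_comm]
    refine ⟨of X, ext fun i j ↦ mul_left_cancel₀ hP ?_⟩
    simpa only [smul_apply, smul_eq_mul] using congrFun (congrFun hdet i) j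

theorem isPrincipal_annihilator_cokernel [IsDomain R] [UniqueFactorizationMonoid R]
    {P : Matrix n n R} (hP : P.det ≠ 0) :
    (Module.annihilator R ((n → R) ⧸ LinearMap.range P.mulVecLin)).IsPrincipal := by
  let _ := UniqueFactorizationMonoid.strongNormalizationMonoid (α := R)
  let _ := UniqueFactorizationMonoid.toNormalizedGCDMonoid R
  obtain ⟨q, hq⟩ := exists_dvd_iff_forall_dvd_mul hP fun ij : n × n ↦ P.adjugate ij.1 ij.2
  refine ⟨q, Ideal.ext fun r ↦ ?_⟩
  rw [mem_annihilator_cokernel_iff, exists_mul_eq_smul_one_iff hP, Ideal.submodule_span_eq,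
    Ideal.mem_span_singleton, hq, Prod.forall]

end Matrix

theorem LinearMap.isPrincipal_annihilator_cokernel {R V : Type*} [CommRing R] [IsDomain R]
    [UniqueFactorizationMonoid R] [AddCommGroup V] [Module R V] [Module.Free R V]
    [Module.Finite R V] {φ : V →ₗ[R] V} (hφ : LinearMap.det φ ≠ 0) :
    (Module.annihilator R (V ⧸ LinearMap.range φ)).IsPrincipal := by
  let e := (Module.finBasis R V).equivFun
  have hrange : (LinearMap.range φ).map (e : V →ₗ[R] _) = LinearMap.range (e.conj φ) := by
    rw [LinearEquiv.conj_apply, LinearMap.range_comp_of_range_eq_top _ e.symm.range,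
      LinearMap.range_comp]
  rw [(Submodule.Quotient.equiv _ _ e hrange).annihilator_eq,
    ← Matrix.toLin'_toMatrix' (e.conj φ)]
  refine Matrix.isPrincipal_annihilator_cokernel ?_
  rwa [LinearMap.det_toMatrix', LinearEquiv.conj_apply, LinearMap.comp_assoc, LinearMap.det_conj]

section

variable (k : Type) [Field k] {A : Type} [Ring A] [Algebra k A] {d l : ℕ}
  (b : Module.Basis (Fin d) k A) {M : Type} [AddCommGroup M] [Module k M] [Module A M]
  [IsScalarTower k A M]

theorem sum_repr_smul_actL (a : A) :
    ∑ i, b.repr a i • actL k (M := M) (b i) = actL k a := by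
  simp only [actL, ← AlgHom.toLinearMap_apply, ← map_smul, ← map_sum, b.sum_repr]

theorem toMatrix_genId {ι : Type*} [Fintype ι] [DecidableEq ι] (m : Module.Basis ι k M)
    (j : Fin l) :
    LinearMap.toMatrix (Algebra.TensorProduct.basis (polyR k d l) m)
      (Algebra.TensorProduct.basis (polyR k d l) m) (genId k b j) =
    ∑ i, (MvPolynomial.X (i, j) : polyR k d l) •
      (LinearMap.toMatrix m m (actL k (b i))).map (algebraMap k (polyR k d l)) := by
  simp only [genId, map_sum, map_smul, LinearMap.toMatrix_baseChange]

theorem aeval_det_genId [Module.Finite k M] (a : A) (j : Fin l) :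
    MvPolynomial.aeval (fun q ↦ b.repr a q.1) (LinearMap.det (genId k b (M := M) j)) =
      LinearMap.det (actL k (M := M) a) := by
  rw [← LinearMap.det_toMatrix (Algebra.TensorProduct.basis _ (Module.finBasis k M)),
    ← LinearMap.det_toMatrix (Module.finBasis k M), AlgHom.map_det, toMatrix_genId,
    ← sum_repr_smul_actL k b a]
  congr 1
  ext s t
  simp [Matrix.sum_apply, MvPolynomial.algebraMap_eq]

theorem det_genId_ne_zero [Module.Finite k M] (j : Fin l) :
    LinearMap.det (genId k b (M := M) j) ≠ 0 := by
  intro h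
  have h1 := aeval_det_genId k b (M := M) 1 j
  rw [h, map_zero, actL, map_one, map_one] at h1
  exact zero_ne_one h1

end

theorem statement5_general (k : Type) [Field k] {A : Type} [Ring A] [Algebra k A]
    {d : ℕ} (b : Module.Basis (Fin d) k A)
    (M : Type) [AddCommGroup M] [Module k M] [Module A M] [IsScalarTower k A M]
    [Module.Finite k M] :
    (Module.annihilator (polyR k d 1)
        (polyR k d 1 ⊗[k] M ⧸ genSub k (l := 1) b (M := M))).IsPrincipal := by
  rw [genSub, iSup_unique]
  exact LinearMap.isPrincipal_annihilator_cokernel (det_genId_ne_zero k b _)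

/-- For every nonzero finite-dimensional `A`-module `M`, the annihilator of
the `R`-module `F_1(M)` is a principal ideal of `R`. -/
theorem statement5 (k : Type) [Field k] {A : Type} [Ring A] [Algebra k A]
    {d : ℕ} (b : Module.Basis (Fin d) k A)
    (M : Type) [AddCommGroup M] [Module k M] [Module A M] [IsScalarTower k A M]
    [Module.Finite k M] [Nontrivial M] :
    (Module.annihilator (polyR k d 1)
        (polyR k d 1 ⊗[k] M ⧸ genSub k (l := 1) b (M := M))).IsPrincipal :=
  statement5_general k b M
end
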